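/- Let c and ℓ be real numbers and, for (x,y) ∈ ℝ × (0,∞) and a real parameter Δ, let F(x,y) = e^{−2πyΔ + 2πi x ℓ} y^{c/2}. Then (Δ_H − (c/2)(1 − c/2)) F + (c Δ ∂_Δ + (Δ² − ℓ²) ∂_Δ²)[e^{−2πyΔ + 2πi x ℓ} y^{c/2}] = 0, where Δ_H = −y²(∂_x² + ∂_y²) and ∂_Δ differentiates with respect to the parameter Δ. -/
import Mathlib

open Real

private lemma expDeriv (a b : ℂ) (t : ℝ) :
    HasDerivAt (fun s : ℝ => Complex.exp (a * s + b)) (a * Complex.exp (a * t + b)) t := by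
  have h : HasDerivAt (fun s : ℝ => a * (s : ℂ) + b) a t := by
    simpa using (Complex.ofRealCLM.hasDerivAt.const_mul a).add_const b
  simpa [mul_comm] using h.cexp

/-- The hyperbolic Laplacian `Δ_H = -y²(∂_x² + ∂_y²)` in coordinates `(x, y)`. -/
noncomputable def hypLapXY (F : ℝ → ℝ → ℂ) (x y : ℝ) : ℂ :=
  -(y : ℂ) ^ 2 *
    (deriv (fun x' : ℝ => deriv (fun x'' : ℝ => F x'' y) x') x +
     deriv (fun y' : ℝ => deriv (fun y'' : ℝ => F x y'') y') y)

theorem stmt16 (c ℓ : ℝ) :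
    ∀ x y Δ : ℝ, 0 < y →
      (fun G : ℝ → ℝ → ℝ → ℂ =>
        (hypLapXY (fun x' y' => G x' y' Δ) x y - (c / 2) * (1 - c / 2) * G x y Δ) +
          (c * Δ * deriv (fun Δ' => G x y Δ') Δ +
            (Δ ^ 2 - ℓ ^ 2) * deriv (fun Δ' => deriv (fun Δ'' => G x y Δ'') Δ') Δ) = 0)
      (fun x' y' Δ' =>
        Complex.exp (((-2 * π * y' * Δ' : ℝ) : ℂ) + 2 * (π : ℂ) * Complex.I * (x' : ℂ) * (ℓ : ℂ)) *
          ((y' ^ (c / 2) : ℝ) : ℂ)) := by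
  intro x y Δ hy
  have hy0 : y ≠ 0 := hy.ne'
  beta_reduce
  simp only [hypLapXY]
  set ax : ℂ := 2 * (π : ℂ) * Complex.I * (ℓ : ℂ) with hax
  set aY : ℂ := -2 * (π : ℂ) * (Δ : ℂ) with haY
  set aD : ℂ := -2 * (π : ℂ) * (y : ℂ) with haD
  set bx : ℂ := ((-2 * π * y * Δ : ℝ) : ℂ) with hbx
  set bD : ℂ := 2 * (π : ℂ) * Complex.I * (x : ℂ) * (ℓ : ℂ) with hbD
  set Y : ℂ := ((y ^ (c / 2) : ℝ) : ℂ) with hYdef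
  -- rewrite the three inner functions into `exp (a * s + b) * ...` shape
  have eX : (fun x'' : ℝ =>
      Complex.exp (((-2 * π * y * Δ : ℝ) : ℂ) + 2 * (π : ℂ) * Complex.I * (x'' : ℂ) * (ℓ : ℂ)) *
        ((y ^ (c / 2) : ℝ) : ℂ))
      = fun x'' : ℝ => Complex.exp (ax * (x'' : ℂ) + bx) * Y := by
    funext s
    rw [show ((-2 * π * y * Δ : ℝ) : ℂ) + 2 * (π : ℂ) * Complex.I * (s : ℂ) * (ℓ : ℂ)
        = ax * (s : ℂ) + bx from by rw [hax, hbx]; ring]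
  have eY : (fun y'' : ℝ =>
      Complex.exp (((-2 * π * y'' * Δ : ℝ) : ℂ) + 2 * (π : ℂ) * Complex.I * (x : ℂ) * (ℓ : ℂ)) *
        ((y'' ^ (c / 2) : ℝ) : ℂ))
      = fun y'' : ℝ => Complex.exp (aY * (y'' : ℂ) + bD) * ((y'' ^ (c / 2) : ℝ) : ℂ) := by
    funext s
    rw [show ((-2 * π * s * Δ : ℝ) : ℂ) + 2 * (π : ℂ) * Complex.I * (x : ℂ) * (ℓ : ℂ)
        = aY * (s : ℂ) + bD from by rw [haY, hbD]; push_cast; ring]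
  have eD : (fun Δ'' : ℝ =>
      Complex.exp (((-2 * π * y * Δ'' : ℝ) : ℂ) + 2 * (π : ℂ) * Complex.I * (x : ℂ) * (ℓ : ℂ)) *
        ((y ^ (c / 2) : ℝ) : ℂ))
      = fun Δ'' : ℝ => Complex.exp (aD * (Δ'' : ℂ) + bD) * Y := by
    funext s
    rw [show ((-2 * π * y * s : ℝ) : ℂ) + 2 * (π : ℂ) * Complex.I * (x : ℂ) * (ℓ : ℂ)
        = aD * (s : ℂ) + bD from by rw [haD, hbD]; push_cast; ring]
  rw [eX, eY, eD]
  -- second derivative in x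
  have ex1 : (fun t : ℝ => deriv (fun s : ℝ => Complex.exp (ax * s + bx) * Y) t)
      = fun t : ℝ => ax * Complex.exp (ax * t + bx) * Y :=
    funext fun t => ((expDeriv ax bx t).mul_const Y).deriv
  have dxx : deriv (fun t : ℝ => deriv (fun s : ℝ => Complex.exp (ax * s + bx) * Y) t) x
      = ax * (ax * Complex.exp (ax * x + bx)) * Y := by
    rw [ex1]; exact (((expDeriv ax bx x).const_mul ax).mul_const Y).deriv
  -- derivatives in Δ
  have dD : deriv (fun s : ℝ => Complex.exp (aD * s + bD) * Y) Δ
      = aD * Complex.exp (aD * Δ + bD) * Y := ((expDeriv aD bD Δ).mul_const Y).deriv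
  have eD1 : (fun t : ℝ => deriv (fun s : ℝ => Complex.exp (aD * s + bD) * Y) t)
      = fun t : ℝ => aD * Complex.exp (aD * t + bD) * Y :=
    funext fun t => ((expDeriv aD bD t).mul_const Y).deriv
  have dDD : deriv (fun t : ℝ => deriv (fun s : ℝ => Complex.exp (aD * s + bD) * Y) t) Δ
      = aD * (aD * Complex.exp (aD * Δ + bD)) * Y := by
    rw [eD1]; exact (((expDeriv aD bD Δ).const_mul aD).mul_const Y).deriv
  -- derivatives in y
  have hy1 : ∀ t : ℝ, 0 < t →
      HasDerivAt (fun s : ℝ => Complex.exp (aY * s + bD) * ((s ^ (c / 2) : ℝ) : ℂ))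
      (aY * Complex.exp (aY * t + bD) * ((t ^ (c / 2) : ℝ) : ℂ)
        + Complex.exp (aY * t + bD) * ((c / 2 * t ^ (c / 2 - 1) : ℝ) : ℂ)) t := by
    intro t ht
    exact (expDeriv aY bD t).mul
      ((Real.hasDerivAt_rpow_const (Or.inl ht.ne')).ofReal_comp)
  have ey1 : deriv (fun t : ℝ =>
        deriv (fun s : ℝ => Complex.exp (aY * s + bD) * ((s ^ (c / 2) : ℝ) : ℂ)) t) y
      = deriv (fun t : ℝ => aY * Complex.exp (aY * t + bD) * ((t ^ (c / 2) : ℝ) : ℂ)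
        + Complex.exp (aY * t + bD) * ((c / 2 * t ^ (c / 2 - 1) : ℝ) : ℂ)) y := by
    apply Filter.EventuallyEq.deriv_eq
    filter_upwards [eventually_gt_nhds hy] with t ht
    exact (hy1 t ht).deriv
  have part1 : HasDerivAt (fun t : ℝ =>
      aY * Complex.exp (aY * t + bD) * ((t ^ (c / 2) : ℝ) : ℂ))
      (aY * (aY * Complex.exp (aY * y + bD)) * ((y ^ (c / 2) : ℝ) : ℂ)
        + aY * Complex.exp (aY * y + bD) * ((c / 2 * y ^ (c / 2 - 1) : ℝ) : ℂ)) y :=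
    ((expDeriv aY bD y).const_mul aY).mul
      ((Real.hasDerivAt_rpow_const (Or.inl hy0)).ofReal_comp)
  have part2 : HasDerivAt (fun t : ℝ =>
      Complex.exp (aY * t + bD) * ((c / 2 * t ^ (c / 2 - 1) : ℝ) : ℂ))
      (aY * Complex.exp (aY * y + bD) * ((c / 2 * y ^ (c / 2 - 1) : ℝ) : ℂ)
        + Complex.exp (aY * y + bD) * ((c / 2 * ((c / 2 - 1) * y ^ (c / 2 - 1 - 1)) : ℝ) : ℂ)) y :=
    (expDeriv aY bD y).mul
      (((Real.hasDerivAt_rpow_const (p := c / 2 - 1) (Or.inl hy0)).const_mul (c / 2)).ofReal_comp)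
  have dyy : deriv (fun t : ℝ =>
        deriv (fun s : ℝ => Complex.exp (aY * s + bD) * ((s ^ (c / 2) : ℝ) : ℂ)) t) y
      = aY * (aY * Complex.exp (aY * y + bD)) * ((y ^ (c / 2) : ℝ) : ℂ)
        + aY * Complex.exp (aY * y + bD) * ((c / 2 * y ^ (c / 2 - 1) : ℝ) : ℂ)
        + (aY * Complex.exp (aY * y + bD) * ((c / 2 * y ^ (c / 2 - 1) : ℝ) : ℂ)
        + Complex.exp (aY * y + bD) * ((c / 2 * ((c / 2 - 1) * y ^ (c / 2 - 1 - 1)) : ℝ) : ℂ)) := by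
    rw [ey1]; exact (part1.add part2).deriv
  rw [dxx, dyy, dD, dDD]
  -- identify the three exponentials
  have hE1 : Complex.exp (ax * x + bx) =
      Complex.exp (((-2 * π * y * Δ : ℝ) : ℂ) + 2 * (π : ℂ) * Complex.I * (x : ℂ) * (ℓ : ℂ)) := by
    rw [show ax * (x : ℂ) + bx
      = ((-2 * π * y * Δ : ℝ) : ℂ) + 2 * (π : ℂ) * Complex.I * (x : ℂ) * (ℓ : ℂ) from by
        rw [hax, hbx]; push_cast; ring]
  have hE2 : Complex.exp (aY * y + bD) =
      Complex.exp (((-2 * π * y * Δ : ℝ) : ℂ) + 2 * (π : ℂ) * Complex.I * (x : ℂ) * (ℓ : ℂ)) := by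
    rw [show aY * (y : ℂ) + bD
      = ((-2 * π * y * Δ : ℝ) : ℂ) + 2 * (π : ℂ) * Complex.I * (x : ℂ) * (ℓ : ℂ) from by
        rw [haY, hbD]; push_cast; ring]
  have hE3 : Complex.exp (aD * Δ + bD) =
      Complex.exp (((-2 * π * y * Δ : ℝ) : ℂ) + 2 * (π : ℂ) * Complex.I * (x : ℂ) * (ℓ : ℂ)) := by
    rw [show aD * (Δ : ℂ) + bD
      = ((-2 * π * y * Δ : ℝ) : ℂ) + 2 * (π : ℂ) * Complex.I * (x : ℂ) * (ℓ : ℂ) from by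
        rw [haD, hbD]; push_cast; ring]
  rw [hE1, hE2, hE3]
  set EE : ℂ :=
    Complex.exp (((-2 * π * y * Δ : ℝ) : ℂ) + 2 * (π : ℂ) * Complex.I * (x : ℂ) * (ℓ : ℂ)) with hEE
  -- rpow algebra
  have hr1 : y ^ (c / 2 - 1) = y * y ^ (c / 2 - 1 - 1) := by
    conv_lhs => rw [show c / 2 - 1 = 1 + (c / 2 - 1 - 1) by ring]
    rw [Real.rpow_add hy, Real.rpow_one]
  have hr0 : y ^ (c / 2) = y ^ 2 * y ^ (c / 2 - 1 - 1) := by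
    conv_lhs => rw [show c / 2 = 2 + (c / 2 - 1 - 1) by ring]
    rw [Real.rpow_add hy, Real.rpow_two]
  rw [hYdef, hr0, hr1, hax, haY, haD]
  push_cast
  linear_combination (-(4 * (π : ℂ) ^ 2 * (ℓ : ℂ) ^ 2 * (y : ℂ) ^ 2) *
    (EE * ((y : ℂ) ^ 2 * ((y ^ (c / 2 - 1 - 1) : ℝ) : ℂ)))) * Complex.I_mul_I
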